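/- Let G be a 3-edge-connected graph and let v be a vertex of degree 3. If G_v is a 3-edge-connected local cubic modification (truncation) of G at v, then F(G_v) ≤ F(G). -/

import Mathlib

/-!
Both Frank numbers are the infimum of the same set of family sizes.

Contracting the triangle back to `v` turns a deletion-covering family of strong orientations of the
truncation into one of `G`, because every edge of `G` has exactly one preimage.

Conversely, an orientation `O` of `G` with arcs `m s → v` and `v → m t` is lifted by orienting the
triangle along the path `s → q → t` through the third vertex `q`, and closing it either to a
directed cycle or to a transitive triangle. The directed triangle keeps every pendant edge that
was deletable in `O` deletable, and makes the triangle edge `st` deletable; the transitive one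
makes `st` and the triangle edge joining the two vertices on the same side of `v` deletable, but
keeps only the pendant edge at `q`. A pendant edge `m i v` can only be deletable in `O` if `i` is
such a midpoint. A pigeonhole argument over the three pendant edges then finds one orientation
that may take the transitive triangle, while the others, with directed triangles and suitable
midpoints, cover the remaining edges.
-/

namespace Frank

variable {V : Type*}

/-- An orientation of a simple graph `G`: each edge gets exactly one direction. -/
structure Orient (G : SimpleGraph V) where
  dir : V → V → Prop
  dir_iff : ∀ u v, (dir u v ∨ dir v u) ↔ G.Adj u v
  not_both : ∀ u v, dir u v → ¬ dir v u

/-- A relation (digraph) is strongly connected. -/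
def IsStrong (r : V → V → Prop) : Prop :=
  ∀ x y : V, Relation.ReflTransGen r x y

/-- Delete the single arc `(u,v)` from the digraph `r`. -/
def delArc (r : V → V → Prop) (u v : V) : V → V → Prop :=
  fun a b => r a b ∧ ¬(a = u ∧ b = v)

/-- Delete (both possible arcs of) the edge `uv` from the digraph `r`. -/
def delEdge (r : V → V → Prop) (u v : V) : V → V → Prop :=
  fun a b => r a b ∧ ¬((a = u ∧ b = v) ∨ (a = v ∧ b = u))

/-- The edge `uv` is deletable in the orientation `O`: after removing its arc the
orientation stays strongly connected. -/
def EdgeDeletable {G : SimpleGraph V} (O : Orient G) (u v : V) : Prop :=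
  IsStrong (delEdge O.dir u v)

/-- The Frank number of `G`: the least `k` admitting `k` strongly connected orientations
such that every edge is deletable in at least one of them. -/
noncomputable def frankNumber (G : SimpleGraph V) : ℕ :=
  sInf {k | ∃ Os : Fin k → Orient G, (∀ i, IsStrong (Os i).dir) ∧
    ∀ u v, G.Adj u v → ∃ i, EdgeDeletable (Os i) u v}

/-- `G` is 2-edge-connected: connected and stays connected after deleting any single edge. -/
def TwoEdgeConn (G : SimpleGraph V) : Prop :=
  G.Connected ∧ ∀ e : Sym2 V, (G.deleteEdges {e}).Connected

/-- `G` is 3-edge-connected: connected and stays connected after deleting any two edges. -/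
def ThreeEdgeConn (G : SimpleGraph V) : Prop :=
  G.Connected ∧ ∀ e f : Sym2 V, (G.deleteEdges {e, f}).Connected

/-- The underlying relation of the local cubic modification of `G` at `v`:
`v` is replaced by a cycle on `ZMod d`, and `m` matches the cycle vertices to
the former neighbours of `v`. -/
def lcmRel (G : SimpleGraph V) (v : V) (d : ℕ) (m : ZMod d → V) :
    ({w : V // w ≠ v} ⊕ ZMod d) → ({w : V // w ≠ v} ⊕ ZMod d) → Prop
  | Sum.inl w, Sum.inl w' => G.Adj w.1 w'.1
  | Sum.inl w, Sum.inr i => w.1 = m i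
  | Sum.inr i, Sum.inr j => j = i + 1
  | Sum.inr _, Sum.inl _ => False

/-- The local cubic modification `G_v(M)` of `G` at `v` given the matching `m`. -/
def localCubicMod (G : SimpleGraph V) (v : V) (d : ℕ) (m : ZMod d → V) :
    SimpleGraph ({w : V // w ≠ v} ⊕ ZMod d) :=
  SimpleGraph.fromRel (lcmRel G v d m)


open Relation

lemma IsStrong.mono {r s : V → V → Prop} (h : ∀ a b, r a b → s a b) (hr : IsStrong r) :
    IsStrong s :=
  fun x y => ReflTransGen.mono h _ _ (hr x y)

lemma IsStrong.of_map {W : Type*} {R : W → W → Prop} {r : V → V → Prop} (f : W → V)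
    (hf : Function.Surjective f) (h : ∀ x y, R x y → ReflTransGen r (f x) (f y))
    (hR : IsStrong R) : IsStrong r := by
  intro a b
  obtain ⟨x, rfl⟩ := hf a
  obtain ⟨y, rfl⟩ := hf b
  exact ReflTransGen.lift' f h _ _ (hR x y)

lemma IsStrong.exists_to {r : V → V → Prop} (hr : IsStrong r) {x y : V} (hxy : x ≠ y) :
    ∃ a, r a y := by
  rcases (hr x y).cases_tail with h | ⟨a, -, ha⟩
  · exact absurd h.symm hxy
  · exact ⟨a, ha⟩

lemma IsStrong.exists_from {r : V → V → Prop} (hr : IsStrong r) {x y : V} (hxy : x ≠ y) :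
    ∃ b, r x b := by
  rcases (hr x y).cases_head with h | ⟨b, hb, -⟩
  · exact absurd h hxy
  · exact ⟨b, hb⟩

lemma delEdge_comm (r : V → V → Prop) (a b : V) : delEdge r a b = delEdge r b a := by
  funext x y
  simp only [delEdge, or_comm]

lemma EdgeDeletable.symm {G : SimpleGraph V} {O : Orient G} {a b : V}
    (h : EdgeDeletable O a b) : EdgeDeletable O b a := by
  rwa [EdgeDeletable, delEdge_comm]

lemma delEdge_of_left_ne {r : V → V → Prop} {a b x y : V} (ha : x ≠ a) (hb : x ≠ b)
    (h : r x y) : delEdge r a b x y :=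
  ⟨h, by rintro (⟨rfl, -⟩ | ⟨rfl, -⟩) <;> contradiction⟩

lemma delEdge_of_right_ne {r : V → V → Prop} {a b x y : V} (ha : y ≠ a) (hb : y ≠ b)
    (h : r x y) : delEdge r a b x y :=
  ⟨h, by rintro (⟨-, rfl⟩ | ⟨-, rfl⟩) <;> contradiction⟩

section Expansion

variable {ι : Type*}

def liftRel (v : V) (r : V → V → Prop) (T : ι → ι → Prop) (m : ι → V) :
    ({w : V // w ≠ v} ⊕ ι) → ({w : V // w ≠ v} ⊕ ι) → Prop
  | .inl a, .inl b => r a b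
  | .inl a, .inr i => a.1 = m i ∧ r a v
  | .inr i, .inl b => b.1 = m i ∧ r v b
  | .inr i, .inr j => T i j

lemma isStrong_of_simulation {v : V} {r : V → V → Prop}
    {R : ({w : V // w ≠ v} ⊕ ι) → ({w : V // w ≠ v} ⊕ ι) → Prop} (hr : IsStrong r)
    (hold : ∀ a b : {w : V // w ≠ v}, r a b → R (.inl a) (.inl b))
    (hthrough : ∀ a b : {w : V // w ≠ v}, r a v → r v b → ReflTransGen R (.inl a) (.inl b))
    (hexit : ∀ i, ∃ b, ReflTransGen R (.inr i) (.inl b))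
    (henter : ∀ i, ∃ a, ReflTransGen R (.inl a) (.inr i)) :
    IsStrong R := by
  -- a walk of `r` that sits at `v` is tracked by the last vertex before it entered `v`
  have walk : ∀ (a : {w : V // w ≠ v}) (b : V), ReflTransGen r a b →
      (∀ hb : b ≠ v, ReflTransGen R (.inl a) (.inl ⟨b, hb⟩)) ∧
      (b = v → ∃ c : {w : V // w ≠ v}, r c v ∧ ReflTransGen R (.inl a) (.inl c)) := by
    intro a b hab
    induction hab with
    | refl => exact ⟨fun _ => .refl, fun h => absurd h a.2⟩
    | @tail b c _ hbc ih =>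
      by_cases hb : b = v <;> by_cases hc : c = v
      · exact ⟨fun h => absurd hc h, fun _ => ih.2 hb⟩
      · obtain ⟨e, hev, hae⟩ := ih.2 hb
        subst hb
        exact ⟨fun hc => hae.trans (hthrough e ⟨c, hc⟩ hev hbc), fun h => absurd h hc⟩
      · subst hc
        exact ⟨fun h => absurd rfl h, fun _ => ⟨⟨b, hb⟩, hbc, ih.1 hb⟩⟩
      · exact ⟨fun hc => (ih.1 hb).tail (hold ⟨b, hb⟩ ⟨c, hc⟩ hbc), fun h => absurd h hc⟩
  have hinl : ∀ a b : {w : V // w ≠ v}, ReflTransGen R (.inl a) (.inl b) :=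
    fun a b => (walk a b (hr a b)).1 b.2
  have hfrom : ∀ x, ∃ a, ReflTransGen R x (.inl a) := by
    rintro (a | i)
    exacts [⟨a, .refl⟩, hexit i]
  have hto : ∀ y, ∃ b, ReflTransGen R (.inl b) y := by
    rintro (b | i)
    exacts [⟨b, .refl⟩, henter i]
  intro x y
  obtain ⟨a, hxa⟩ := hfrom x
  obtain ⟨b, hby⟩ := hto y
  exact hxa.trans ((hinl a b).trans hby)

structure Routes (In Out : ι → Prop) (T : ι → ι → Prop) : Prop where
  through : ∀ i j, In i → Out j → ReflTransGen T i j
  exit : ∀ x, ∃ j, Out j ∧ ReflTransGen T x j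
  enter : ∀ x, ∃ i, In i ∧ ReflTransGen T i x

lemma isStrong_liftRel {v : V} {r : V → V → Prop} {T : ι → ι → Prop} {m : ι → V}
    (hr : IsStrong r) (hmv : ∀ i, m i ≠ v)
    (hin : ∀ a, r a v → ∃ i, m i = a) (hout : ∀ b, r v b → ∃ j, m j = b)
    (hT : Routes (fun i => r (m i) v) (fun j => r v (m j)) T) :
    IsStrong (liftRel v r T m) := by
  have gadget : ∀ {i j}, ReflTransGen T i j →
      ReflTransGen (liftRel v r T m) (.inr i) (.inr j) :=
    fun h => ReflTransGen.lift Sum.inr (fun _ _ h => h) _ _ h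
  refine isStrong_of_simulation hr (fun a b h => h) ?_ ?_ ?_
  · intro a b ha hb
    obtain ⟨i, hi⟩ := hin a ha
    obtain ⟨j, hj⟩ := hout b hb
    have hij := gadget (hT.through i j (hi ▸ ha) (hj ▸ hb))
    exact ((hij.head (show liftRel v r T m (.inl a) (.inr i) from ⟨hi.symm, ha⟩)).tail
      (show liftRel v r T m (.inr j) (.inl b) from ⟨hj.symm, hb⟩))
  · intro x
    obtain ⟨j, hj, hxj⟩ := hT.exit x
    exact ⟨⟨m j, hmv j⟩, (gadget hxj).tail ⟨rfl, hj⟩⟩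
  · intro x
    obtain ⟨i, hi, hix⟩ := hT.enter x
    exact ⟨⟨m i, hmv i⟩, (gadget hix).head (show liftRel v r T m (.inl _) (.inr i) from ⟨rfl, hi⟩)⟩

lemma Routes.of_sink [Nontrivial ι] {In Out : ι → Prop} {T : ι → ι → Prop} {t : ι}
    (hT : ∀ x, x ≠ t → T x t) (hIn : ∀ x, x ≠ t → In x) (ht : Out t)
    (hOut : ∀ j, Out j → j = t) : Routes In Out T := by
  have to_t : ∀ x, ReflTransGen T x t := by
    intro x
    by_cases hx : x = t
    exacts [hx ▸ .refl, .single (hT x hx)]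
  refine ⟨fun i j _ hj => hOut j hj ▸ to_t i, fun x => ⟨t, ht, to_t x⟩, fun x => ?_⟩
  by_cases hx : x = t
  · subst hx
    obtain ⟨y, hy⟩ := exists_ne x
    exact ⟨y, hIn y hy, to_t y⟩
  · exact ⟨x, hIn x hx, .refl⟩

lemma Routes.of_source [Nontrivial ι] {In Out : ι → Prop} {T : ι → ι → Prop} {s : ι}
    (hT : ∀ x, x ≠ s → T s x) (hOut : ∀ x, x ≠ s → Out x) (hs : In s)
    (hIn : ∀ i, In i → i = s) : Routes In Out T := by
  have from_s : ∀ x, ReflTransGen T s x := by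
    intro x
    by_cases hx : x = s
    exacts [hx ▸ .refl, .single (hT x hx)]
  refine ⟨fun i j hi _ => hIn i hi ▸ from_s j, fun x => ?_, fun x => ⟨s, hs, from_s x⟩⟩
  by_cases hx : x = s
  · subst hx
    obtain ⟨y, hy⟩ := exists_ne x
    exact ⟨y, hOut y hy, from_s y⟩
  · exact ⟨x, hOut x hx, .refl⟩

end Expansion

section Triangle

-- For `s ≠ t` in `ZMod 3`, `-(s + t)` is the third vertex of the triangle.
lemma third_ne_left : ∀ {s t : ZMod 3}, s ≠ t → -(s + t) ≠ s := by decide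

lemma third_ne_right : ∀ {s t : ZMod 3}, s ≠ t → -(s + t) ≠ t := by decide

lemma eq_or_eq_or_eq_third : ∀ {s t : ZMod 3}, s ≠ t → ∀ x, x = s ∨ x = t ∨ x = -(s + t) := by
  decide

lemma eq_third_of_ne : ∀ {s t x : ZMod 3}, s ≠ t → x ≠ s → x ≠ t → x = -(s + t) := by decide

lemma eq_and_eq_of_third_eq : ∀ {a b s t : ZMod 3}, a ≠ b → s ≠ t → -(a + b) = -(s + t) →
    (a = s ∧ b = t) ∨ (a = t ∧ b = s) := by
  decide

lemma reflTransGen_of_spine {T : ZMod 3 → ZMod 3 → Prop} {s t : ZMod 3} (hst : s ≠ t)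
    (h₁ : T s (-(s + t))) (h₂ : T (-(s + t)) t) {x y : ZMod 3} (hx : x ≠ t) (hy : y ≠ s) :
    ReflTransGen T x y := by
  rcases eq_or_eq_or_eq_third hst x with rfl | rfl | rfl <;>
    rcases eq_or_eq_or_eq_third hst y with rfl | rfl | rfl <;>
    first
    | exact absurd rfl hx | exact absurd rfl hy | exact .refl
    | exact .single h₁ | exact .single h₂ | exact (ReflTransGen.single h₁).tail h₂

lemma reflTransGen_of_spine_left {T : ZMod 3 → ZMod 3 → Prop} {s t : ZMod 3} (hst : s ≠ t)
    (h₁ : T s (-(s + t))) (h₂ : T (-(s + t)) t) (y : ZMod 3) : ReflTransGen T s y := by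
  by_cases hy : y = s
  exacts [hy ▸ .refl, reflTransGen_of_spine hst h₁ h₂ hst hy]

lemma reflTransGen_of_spine_right {T : ZMod 3 → ZMod 3 → Prop} {s t : ZMod 3} (hst : s ≠ t)
    (h₁ : T s (-(s + t))) (h₂ : T (-(s + t)) t) (x : ZMod 3) : ReflTransGen T x t := by
  by_cases hx : x = t
  exacts [hx ▸ .refl, reflTransGen_of_spine hst h₁ h₂ hx hst.symm]

lemma Routes.of_spine {In Out : ZMod 3 → Prop} {T : ZMod 3 → ZMod 3 → Prop} {s t : ZMod 3}
    (hst : s ≠ t) (h₁ : T s (-(s + t))) (h₂ : T (-(s + t)) t) (hs : In s) (ht : Out t)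
    (hIn : ∀ i, In i → i ≠ t) (hOut : ∀ j, Out j → j ≠ s) : Routes In Out T where
  through i j hi hj := reflTransGen_of_spine hst h₁ h₂ (hIn i hi) (hOut j hj)
  exit x := ⟨t, ht, reflTransGen_of_spine_right hst h₁ h₂ x⟩
  enter x := ⟨s, hs, reflTransGen_of_spine_left hst h₁ h₂ x⟩

lemma Routes.of_cycle {In Out : ZMod 3 → Prop} {T : ZMod 3 → ZMod 3 → Prop} {s t : ZMod 3}
    (hst : s ≠ t) (h₁ : T s (-(s + t))) (h₂ : T (-(s + t)) t) (h₃ : T t s)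
    (hIn : ∃ i, In i) (hOut : ∃ j, Out j) : Routes In Out T := by
  have reach : ∀ x y, ReflTransGen T x y := by
    intro x y
    by_cases hx : x = t
    · exact hx ▸ (reflTransGen_of_spine_left hst h₁ h₂ y).head h₃
    by_cases hy : y = s
    · exact hy ▸ (reflTransGen_of_spine_right hst h₁ h₂ x).tail h₃
    exact reflTransGen_of_spine hst h₁ h₂ hx hy
  obtain ⟨i, hi⟩ := hIn
  obtain ⟨j, hj⟩ := hOut
  exact ⟨fun i j _ _ => reach i j, fun x => ⟨j, hj, reach x j⟩, fun x => ⟨i, hi, reach i x⟩⟩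

/-- The triangle oriented along the path `s → q → t` through the third vertex `q`, closed to a
directed cycle by `t → s` if `closed`, and made transitive by `s → t` otherwise. -/
def triOrient (s t : ZMod 3) (hst : s ≠ t) (closed : Prop) :
    Orient (⊤ : SimpleGraph (ZMod 3)) where
  dir i j := (i = s ∧ j = -(s + t)) ∨ (i = -(s + t) ∧ j = t) ∨
    (closed ∧ i = t ∧ j = s) ∨ (¬closed ∧ i = s ∧ j = t)
  dir_iff i j := by
    simp only [SimpleGraph.top_adj]
    revert i j
    by_cases hc : closed <;> simp only [hc, true_and, not_true_eq_false, false_and, or_false,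
      not_false_eq_true, false_or] <;> revert s t <;> decide
  not_both i j := by
    revert i j
    by_cases hc : closed <;> simp only [hc, true_and, not_true_eq_false, false_and, or_false,
      not_false_eq_true, false_or] <;> revert s t <;> decide

def Splits (P : ZMod 3 → Prop) (q : ZMod 3) : Prop :=
  ∃ s t, P s ∧ ¬P t ∧ -(s + t) = q

lemma splits_iff {P : ZMod 3 → Prop} {q x y : ZMod 3} (hqx : q ≠ x) (hqy : q ≠ y) (hxy : x ≠ y) :
    Splits P q ↔ ¬(P x ↔ P y) := by
  have other : ∀ z, z ≠ q → z = x ∨ z = y := by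
    revert q x y; decide
  constructor
  · rintro ⟨s, t, hs, ht, rfl⟩
    have hst : s ≠ t := fun h => ht (h ▸ hs)
    rcases other s (third_ne_left hst).symm with rfl | rfl <;>
      rcases other t (third_ne_right hst).symm with rfl | rfl <;> tauto
  · intro h
    have hq : q = -(x + y) := eq_third_of_ne hxy hqx hqy
    by_cases hx : P x
    · exact ⟨x, y, hx, fun hy => h ⟨fun _ => hy, fun _ => hx⟩, hq.symm⟩
    · exact ⟨y, x, by tauto, hx, by rw [add_comm]; exact hq.symm⟩

lemma exists_not_splits (P : ZMod 3 → Prop) : ∃ q, ¬Splits P q := by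
  by_contra! h
  have h₀ := (splits_iff (P := P) (q := 0) (x := 1) (y := 2) (by decide) (by decide)
    (by decide)).1 (h 0)
  have h₁ := (splits_iff (P := P) (q := 1) (x := 2) (y := 0) (by decide) (by decide)
    (by decide)).1 (h 1)
  have h₂ := (splits_iff (P := P) (q := 2) (x := 0) (y := 1) (by decide) (by decide)
    (by decide)).1 (h 2)
  tauto

end Triangle

section LocalCubicMod

variable {G : SimpleGraph V} {v : V} {d : ℕ} {m : ZMod d → V}

lemma localCubicMod_adj_inl_inl {a b : {w : V // w ≠ v}} :
    (localCubicMod G v d m).Adj (.inl a) (.inl b) ↔ G.Adj a b := by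
  simp only [localCubicMod, SimpleGraph.fromRel_adj, lcmRel, ne_eq, Sum.inl.injEq]
  refine ⟨fun ⟨_, h⟩ => h.elim id fun h => h.symm, fun h => ⟨?_, .inl h⟩⟩
  rintro rfl
  exact G.irrefl h

lemma localCubicMod_adj_inl_inr {a : {w : V // w ≠ v}} {i : ZMod d} :
    (localCubicMod G v d m).Adj (.inl a) (.inr i) ↔ a.1 = m i := by
  simp [localCubicMod, lcmRel]

lemma localCubicMod_adj_inr_inl {a : {w : V // w ≠ v}} {i : ZMod d} :
    (localCubicMod G v d m).Adj (.inr i) (.inl a) ↔ a.1 = m i := by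
  rw [SimpleGraph.adj_comm, localCubicMod_adj_inl_inr]

lemma localCubicMod_three_adj_inr_inr {m : ZMod 3 → V} {i j : ZMod 3} :
    (localCubicMod G v 3 m).Adj (.inr i) (.inr j) ↔ i ≠ j := by
  simp only [localCubicMod, SimpleGraph.fromRel_adj, lcmRel, ne_eq, Sum.inr.injEq]
  revert i j
  decide

lemma adj_of_range_eq (hr : Set.range m = G.neighborSet v) (i : ZMod d) : G.Adj v (m i) := by
  have hi : m i ∈ G.neighborSet v := hr ▸ ⟨i, rfl⟩
  exact hi

lemma ne_of_range_eq (hr : Set.range m = G.neighborSet v) (i : ZMod d) : m i ≠ v :=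
  (G.ne_of_adj (adj_of_range_eq hr i)).symm

lemma exists_eq_of_adj (hr : Set.range m = G.neighborSet v) {a : V} (h : G.Adj v a) :
    ∃ i, m i = a := by
  have ha : a ∈ Set.range m := hr ▸ h
  exact ha

lemma exists_eq_of_dir_to (hr : Set.range m = G.neighborSet v) (O : Orient G) {a : V}
    (h : O.dir a v) : ∃ i, m i = a :=
  exists_eq_of_adj hr ((O.dir_iff a v).1 (.inl h)).symm

lemma exists_eq_of_dir_from (hr : Set.range m = G.neighborSet v) (O : Orient G) {b : V}
    (h : O.dir v b) : ∃ j, m j = b :=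
  exists_eq_of_adj hr ((O.dir_iff v b).1 (.inl h))

lemma dir_from_of_not_dir_to (hr : Set.range m = G.neighborSet v) (O : Orient G) {i : ZMod d}
    (h : ¬O.dir (m i) v) : O.dir v (m i) :=
  ((O.dir_iff _ _).2 (adj_of_range_eq hr i).symm).resolve_left h

lemma exists_dir_to_ne_of_edgeDeletable (hr : Set.range m = G.neighborSet v) {O : Orient G}
    {i : ZMod d} (h : EdgeDeletable O (m i) v) : ∃ j, O.dir (m j) v ∧ j ≠ i := by
  obtain ⟨a, ha, hne⟩ := h.exists_to (ne_of_range_eq hr i)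
  obtain ⟨j, rfl⟩ := exists_eq_of_dir_to hr O ha
  exact ⟨j, ha, fun hji => hne (.inl ⟨by rw [hji], rfl⟩)⟩

lemma exists_dir_from_ne_of_edgeDeletable (hr : Set.range m = G.neighborSet v) {O : Orient G}
    {i : ZMod d} (h : EdgeDeletable O (m i) v) : ∃ j, O.dir v (m j) ∧ j ≠ i := by
  obtain ⟨b, hb, hne⟩ := h.exists_from (ne_of_range_eq hr i).symm
  obtain ⟨j, rfl⟩ := exists_eq_of_dir_from hr O hb
  exact ⟨j, hb, fun hji => hne (.inr ⟨rfl, by rw [hji]⟩)⟩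

end LocalCubicMod

section Lift

variable {G : SimpleGraph V} {v : V} {m : ZMod 3 → V}

def liftOrient (hr : Set.range m = G.neighborSet v) (O : Orient G)
    (T : Orient (⊤ : SimpleGraph (ZMod 3))) : Orient (localCubicMod G v 3 m) where
  dir := liftRel v O.dir T.dir m
  dir_iff := by
    rintro (a | i) (b | j)
    · exact (O.dir_iff a b).trans localCubicMod_adj_inl_inl.symm
    · rw [localCubicMod_adj_inl_inr]
      refine (and_or_left.symm.trans (and_iff_left_of_imp fun h => ?_))
      exact (O.dir_iff _ _).2 (h ▸ (adj_of_range_eq hr j).symm)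
    · rw [localCubicMod_adj_inr_inl]
      refine (or_comm.trans (and_or_left.symm.trans (and_iff_left_of_imp fun h => ?_)))
      exact (O.dir_iff _ _).2 (h ▸ (adj_of_range_eq hr i).symm)
    · exact (T.dir_iff i j).trans localCubicMod_three_adj_inr_inr.symm
  not_both := by
    rintro (a | i) (b | j) h h'
    · exact O.not_both _ _ h h'
    · exact O.not_both _ _ h.2 h'.2
    · exact O.not_both _ _ h.2 h'.2
    · exact T.not_both _ _ h h'

lemma isStrong_liftOrient (hr : Set.range m = G.neighborSet v) {O : Orient G}
    {T : Orient (⊤ : SimpleGraph (ZMod 3))} (hO : IsStrong O.dir)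
    (hT : Routes (fun i => O.dir (m i) v) (fun j => O.dir v (m j)) T.dir) :
    IsStrong (liftOrient hr O T).dir :=
  isStrong_liftRel hO (ne_of_range_eq hr) (fun _ => exists_eq_of_dir_to hr O)
    (fun _ => exists_eq_of_dir_from hr O) hT

lemma edgeDeletable_liftOrient_inl (hr : Set.range m = G.neighborSet v) {O : Orient G}
    {T : Orient (⊤ : SimpleGraph (ZMod 3))} {p p' : {w : V // w ≠ v}}
    (h : EdgeDeletable O p p')
    (hT : Routes (fun i => O.dir (m i) v) (fun j => O.dir v (m j)) T.dir) :
    EdgeDeletable (liftOrient hr O T) (.inl p) (.inl p') := by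
  have hIn : (fun i => delEdge O.dir p p' (m i) v) = fun i => O.dir (m i) v :=
    funext fun i => propext ⟨And.left, delEdge_of_right_ne p.2.symm p'.2.symm⟩
  have hOut : (fun j => delEdge O.dir p p' v (m j)) = fun j => O.dir v (m j) :=
    funext fun j => propext ⟨And.left, delEdge_of_left_ne p.2.symm p'.2.symm⟩
  refine IsStrong.mono ?_ (isStrong_liftRel h (ne_of_range_eq hr)
    (fun _ h => exists_eq_of_dir_to hr O h.1) (fun _ h => exists_eq_of_dir_from hr O h.1)
    (hIn ▸ hOut ▸ hT))
  rintro (a | i) (b | j) hab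
  · exact ⟨hab.1, fun h => hab.2 (by simpa [Subtype.ext_iff] using h)⟩
  · exact ⟨⟨hab.1, hab.2.1⟩, by simp⟩
  · exact ⟨⟨hab.1, hab.2.1⟩, by simp⟩
  · exact ⟨hab, by simp⟩

lemma edgeDeletable_liftOrient_pendant (hm : Function.Injective m)
    (hr : Set.range m = G.neighborSet v) {O : Orient G} {T : Orient (⊤ : SimpleGraph (ZMod 3))}
    {i : ZMod 3} (h : EdgeDeletable O (m i) v)
    (hT : Routes (fun j => O.dir (m j) v ∧ j ≠ i) (fun j => O.dir v (m j) ∧ j ≠ i) T.dir) :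
    EdgeDeletable (liftOrient hr O T) (.inl ⟨m i, ne_of_range_eq hr i⟩) (.inr i) := by
  have hIn : (fun j => delEdge O.dir (m i) v (m j) v) = fun j => O.dir (m j) v ∧ j ≠ i := by
    funext j
    simp [delEdge, hm.eq_iff, ne_of_range_eq hr j]
  have hOut : (fun j => delEdge O.dir (m i) v v (m j)) = fun j => O.dir v (m j) ∧ j ≠ i := by
    funext j
    simp [delEdge, hm.eq_iff, (ne_of_range_eq hr i).symm]
  refine IsStrong.mono ?_ (isStrong_liftRel h (ne_of_range_eq hr)
    (fun _ h => exists_eq_of_dir_to hr O h.1) (fun _ h => exists_eq_of_dir_from hr O h.1)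
    (hIn ▸ hOut ▸ hT))
  rintro (a | j) (b | k) hab
  · exact ⟨hab.1, by simp⟩
  · refine ⟨⟨hab.1, hab.2.1⟩, fun h => hab.2.2 (.inl ⟨?_, rfl⟩)⟩
    simp only [Sum.inl.injEq, Subtype.ext_iff, reduceCtorEq, false_and, or_false] at h
    exact h.1
  · refine ⟨⟨hab.1, hab.2.1⟩, fun h => hab.2.2 (.inr ⟨rfl, ?_⟩)⟩
    simp only [Sum.inl.injEq, Subtype.ext_iff, reduceCtorEq, false_and, false_or] at h
    exact h.2
  · exact ⟨hab, by simp⟩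

lemma edgeDeletable_liftOrient_inr (hr : Set.range m = G.neighborSet v) {O : Orient G}
    {T : Orient (⊤ : SimpleGraph (ZMod 3))} {a b : ZMod 3} (hO : IsStrong O.dir)
    (hT : Routes (fun i => O.dir (m i) v) (fun j => O.dir v (m j)) (delEdge T.dir a b)) :
    EdgeDeletable (liftOrient hr O T) (.inr a) (.inr b) := by
  refine IsStrong.mono ?_ (isStrong_liftRel hO (ne_of_range_eq hr)
    (fun _ => exists_eq_of_dir_to hr O) (fun _ => exists_eq_of_dir_from hr O) hT)
  rintro (x | i) (y | j) hxy
  · exact ⟨hxy, by simp⟩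
  · exact ⟨hxy, by simp⟩
  · exact ⟨hxy, by simp⟩
  · exact ⟨hxy.1, by simpa using hxy.2⟩

end Lift

section LiftTriangle

variable {G : SimpleGraph V} {v : V} {m : ZMod 3 → V} {O : Orient G} {s t : ZMod 3}

lemma routes_triOrient (hst : s ≠ t) (hs : O.dir (m s) v) (ht : O.dir v (m t)) (c : Prop) :
    Routes (fun i => O.dir (m i) v) (fun j => O.dir v (m j)) (triOrient s t hst c).dir :=
  .of_spine hst (.inl ⟨rfl, rfl⟩) (.inr (.inl ⟨rfl, rfl⟩)) hs ht
    (fun _ hi h => O.not_both _ _ ht (h ▸ hi)) (fun _ hj h => O.not_both _ _ hs (h ▸ hj))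

lemma edgeDeletable_liftTri_pendant (hm : Function.Injective m)
    (hr : Set.range m = G.neighborSet v) (hst : s ≠ t) (hs : O.dir (m s) v)
    (ht : O.dir v (m t)) {c : Prop} {i : ZMod 3} (h : EdgeDeletable O (m i) v)
    (hc : c ∨ i = -(s + t)) :
    EdgeDeletable (liftOrient hr O (triOrient s t hst c))
      (.inl ⟨m i, ne_of_range_eq hr i⟩) (.inr i) := by
  apply edgeDeletable_liftOrient_pendant hm hr h
  rcases hc with hc | rfl
  · exact .of_cycle hst (.inl ⟨rfl, rfl⟩) (.inr (.inl ⟨rfl, rfl⟩))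
      (.inr (.inr (.inl ⟨hc, rfl, rfl⟩))) (exists_dir_to_ne_of_edgeDeletable hr h)
      (exists_dir_from_ne_of_edgeDeletable hr h)
  · exact .of_spine hst (.inl ⟨rfl, rfl⟩) (.inr (.inl ⟨rfl, rfl⟩))
      ⟨hs, (third_ne_left hst).symm⟩ ⟨ht, (third_ne_right hst).symm⟩
      (fun _ hj h => O.not_both _ _ ht (h ▸ hj.1)) (fun _ hj h => O.not_both _ _ hs (h ▸ hj.1))

lemma edgeDeletable_liftTri_inr_of_third_eq (hr : Set.range m = G.neighborSet v) (hst : s ≠ t)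
    (hs : O.dir (m s) v) (ht : O.dir v (m t)) (hO : IsStrong O.dir) {c : Prop} {a b : ZMod 3}
    (hab : a ≠ b) (h : -(a + b) = -(s + t)) :
    EdgeDeletable (liftOrient hr O (triOrient s t hst c)) (.inr a) (.inr b) := by
  have key : EdgeDeletable (liftOrient hr O (triOrient s t hst c)) (.inr s) (.inr t) :=
    edgeDeletable_liftOrient_inr hr hO <| .of_spine hst
      (delEdge_of_right_ne (third_ne_left hst) (third_ne_right hst) (.inl ⟨rfl, rfl⟩))
      (delEdge_of_left_ne (third_ne_left hst) (third_ne_right hst) (.inr (.inl ⟨rfl, rfl⟩)))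
      hs ht (fun _ hi h => O.not_both _ _ ht (h ▸ hi)) (fun _ hj h => O.not_both _ _ hs (h ▸ hj))
  rcases eq_and_eq_of_third_eq hab hst h with ⟨rfl, rfl⟩ | ⟨rfl, rfl⟩
  exacts [key, key.symm]

/-- When the middle vertex `q` of the transitive triangle is entered from `m q`, the in-vertices
`s, q` both still feed the sink `t` after the edge `s q` is deleted. -/
lemma edgeDeletable_liftTri_left_third (hr : Set.range m = G.neighborSet v) (hst : s ≠ t)
    (hs : O.dir (m s) v) (ht : O.dir v (m t)) (hO : IsStrong O.dir) {c : Prop} (hc : ¬c)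
    (hq : O.dir (m (-(s + t))) v) :
    EdgeDeletable (liftOrient hr O (triOrient s t hst c)) (.inr s) (.inr (-(s + t))) := by
  refine edgeDeletable_liftOrient_inr hr hO (.of_sink (t := t) (fun x hx => ?_) (fun x hx => ?_)
    ht fun j hj => ?_)
  · have hne : t ≠ s ∧ t ≠ -(s + t) := ⟨hst.symm, (third_ne_right hst).symm⟩
    rcases eq_or_eq_or_eq_third hst x with rfl | rfl | rfl
    · exact delEdge_of_right_ne hne.1 hne.2 (.inr (.inr (.inr ⟨hc, rfl, rfl⟩)))
    · exact absurd rfl hx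
    · exact delEdge_of_right_ne hne.1 hne.2 (.inr (.inl ⟨rfl, rfl⟩))
  · rcases eq_or_eq_or_eq_third hst x with rfl | rfl | rfl
    exacts [hs, absurd rfl hx, hq]
  · rcases eq_or_eq_or_eq_third hst j with rfl | rfl | rfl
    exacts [absurd hj (O.not_both _ _ hs), rfl, absurd hj (O.not_both _ _ hq)]

lemma edgeDeletable_liftTri_third_right (hr : Set.range m = G.neighborSet v) (hst : s ≠ t)
    (hs : O.dir (m s) v) (ht : O.dir v (m t)) (hO : IsStrong O.dir) {c : Prop} (hc : ¬c)
    (hq : O.dir v (m (-(s + t)))) :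
    EdgeDeletable (liftOrient hr O (triOrient s t hst c)) (.inr (-(s + t))) (.inr t) := by
  refine edgeDeletable_liftOrient_inr hr hO (.of_source (s := s) (fun x hx => ?_)
    (fun x hx => ?_) hs fun i hi => ?_)
  · have hne : s ≠ -(s + t) ∧ s ≠ t := ⟨(third_ne_left hst).symm, hst⟩
    rcases eq_or_eq_or_eq_third hst x with rfl | rfl | rfl
    · exact absurd rfl hx
    · exact delEdge_of_left_ne hne.1 hne.2 (.inr (.inr (.inr ⟨hc, rfl, rfl⟩)))
    · exact delEdge_of_left_ne hne.1 hne.2 (.inl ⟨rfl, rfl⟩)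
  · rcases eq_or_eq_or_eq_third hst x with rfl | rfl | rfl
    exacts [absurd rfl hx, ht, hq]
  · rcases eq_or_eq_or_eq_third hst i with rfl | rfl | rfl
    exacts [rfl, absurd hi (O.not_both _ _ ht), absurd hi (O.not_both _ _ hq)]

lemma edgeDeletable_liftTri_inr_of_not_splits (hr : Set.range m = G.neighborSet v)
    (hst : s ≠ t) (hs : O.dir (m s) v) (ht : O.dir v (m t)) (hO : IsStrong O.dir) {c : Prop}
    (hc : ¬c) {a b : ZMod 3} (hab : a ≠ b)
    (h : ¬Splits (fun i => O.dir (m i) v) (-(a + b))) :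
    EdgeDeletable (liftOrient hr O (triOrient s t hst c)) (.inr a) (.inr b) := by
  have hsq : s ≠ -(s + t) := (third_ne_left hst).symm
  have hqt : -(s + t) ≠ t := third_ne_right hst
  have ht' : ¬O.dir (m t) v := O.not_both _ _ ht
  have hnq : -(a + b) ≠ -(s + t) := fun hx => h ⟨s, t, hs, ht', hx.symm⟩
  by_cases hq : O.dir (m (-(s + t))) v
  · have hx : -(a + b) = -(s + -(s + t)) := by
      rcases eq_or_eq_or_eq_third hst (-(a + b)) with hx | hx | hx
      · exact absurd ⟨_, t, hq, ht', by rw [hx]; ring⟩ h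
      · rw [hx]; ring
      · exact absurd hx hnq
    rcases eq_and_eq_of_third_eq hab hsq hx with ⟨rfl, rfl⟩ | ⟨rfl, rfl⟩
    exacts [edgeDeletable_liftTri_left_third hr hst hs ht hO hc hq,
      (edgeDeletable_liftTri_left_third hr hst hs ht hO hc hq).symm]
  · have hx : -(a + b) = -(-(s + t) + t) := by
      rcases eq_or_eq_or_eq_third hst (-(a + b)) with hx | hx | hx
      · rw [hx]; ring
      · exact absurd ⟨s, _, hs, hq, by rw [hx]; ring⟩ h
      · exact absurd hx hnq
    have hq' := dir_from_of_not_dir_to hr O hq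
    rcases eq_and_eq_of_third_eq hab hqt hx with ⟨rfl, rfl⟩ | ⟨rfl, rfl⟩
    exacts [edgeDeletable_liftTri_third_right hr hst hs ht hO hc hq',
      (edgeDeletable_liftTri_third_right hr hst hs ht hO hc hq').symm]

end LiftTriangle

section Contraction

variable {G : SimpleGraph V} {v : V} {d : ℕ} {m : ZMod d → V}

def collapse (v : V) : ({w : V // w ≠ v} ⊕ ZMod d) → V :=
  Sum.elim Subtype.val fun _ => v

lemma collapse_surjective : Function.Surjective (collapse v : _ ⊕ ZMod d → V) := by
  intro a
  by_cases ha : a = v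
  · exact ⟨.inr 0, ha.symm⟩
  · exact ⟨.inl ⟨a, ha⟩, rfl⟩

lemma adj_collapse (hr : Set.range m = G.neighborSet v) {x y : {w : V // w ≠ v} ⊕ ZMod d}
    (h : (localCubicMod G v d m).Adj x y) (hne : collapse v x ≠ collapse v y) :
    G.Adj (collapse v x) (collapse v y) := by
  rcases x with a | i <;> rcases y with b | j
  · exact localCubicMod_adj_inl_inl.1 h
  · change G.Adj a.1 v
    exact localCubicMod_adj_inl_inr.1 h ▸ (adj_of_range_eq hr j).symm
  · change G.Adj v b.1
    exact localCubicMod_adj_inr_inl.1 h ▸ adj_of_range_eq hr i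
  · exact absurd rfl hne

lemma exists_adj_collapse_eq (hr : Set.range m = G.neighborSet v) {a b : V} (h : G.Adj a b) :
    ∃ x y, (localCubicMod G v d m).Adj x y ∧ collapse v x = a ∧ collapse v y = b := by
  by_cases ha : a = v
  · subst ha
    obtain ⟨i, rfl⟩ := exists_eq_of_adj hr h
    exact ⟨.inr i, .inl ⟨m i, ne_of_range_eq hr i⟩, localCubicMod_adj_inr_inl.2 rfl, rfl, rfl⟩
  by_cases hb : b = v
  · subst hb
    obtain ⟨i, rfl⟩ := exists_eq_of_adj hr h.symm
    exact ⟨.inl ⟨m i, ne_of_range_eq hr i⟩, .inr i, localCubicMod_adj_inl_inr.2 rfl, rfl, rfl⟩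
  exact ⟨.inl ⟨a, ha⟩, .inl ⟨b, hb⟩, localCubicMod_adj_inl_inl.2 h, rfl, rfl⟩

/-- Distinct edges of the modification have distinct images in `G`: the only edges that could
collide are the pendant edges at the gadget, and `m` is injective. -/
lemma eq_of_adj_of_collapse_eq (hm : Function.Injective m) {x y x' y' : {w : V // w ≠ v} ⊕ ZMod d}
    (h : (localCubicMod G v d m).Adj x y) (h' : (localCubicMod G v d m).Adj x' y')
    (hx : collapse v x = collapse v x') (hy : collapse v y = collapse v y')
    (hne : collapse v x ≠ collapse v y) : x = x' := by
  rcases x with a | i <;> rcases x' with a' | i'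
  · exact congrArg Sum.inl (Subtype.ext hx)
  · exact absurd hx a.2
  · exact absurd hx.symm a'.2
  rcases y with b | j
  · rcases y' with b' | j'
    · rw [localCubicMod_adj_inr_inl] at h h'
      exact congrArg Sum.inr (hm (h.symm.trans (hy.trans h')))
    · exact absurd hy b.2
  · exact absurd rfl hne

def contractOrient (hr : Set.range m = G.neighborSet v) (hm : Function.Injective m)
    (O : Orient (localCubicMod G v d m)) : Orient G where
  dir a b := a ≠ b ∧ Relation.Map O.dir (collapse v) (collapse v) a b
  dir_iff a b := by
    constructor
    · rintro (⟨hne, x, y, hxy, rfl, rfl⟩ | ⟨hne, x, y, hxy, rfl, rfl⟩)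
      · exact adj_collapse hr ((O.dir_iff x y).1 (.inl hxy)) hne
      · exact (adj_collapse hr ((O.dir_iff x y).1 (.inl hxy)) hne).symm
    · intro h
      obtain ⟨x, y, hxy, rfl, rfl⟩ := exists_adj_collapse_eq hr h
      rcases (O.dir_iff x y).2 hxy with hd | hd
      exacts [.inl ⟨G.ne_of_adj h, x, y, hd, rfl, rfl⟩,
        .inr ⟨(G.ne_of_adj h).symm, y, x, hd, rfl, rfl⟩]
  not_both := by
    rintro _ _ ⟨hne, x, y, hd, rfl, rfl⟩ ⟨-, y', x', hd', hy, hx⟩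
    have hxy := (O.dir_iff x y).1 (.inl hd)
    have hxy' := (O.dir_iff x' y').1 (.inr hd')
    obtain rfl := eq_of_adj_of_collapse_eq hm hxy hxy' hx.symm hy.symm hne
    obtain rfl := eq_of_adj_of_collapse_eq hm hxy.symm hxy'.symm hy.symm hx.symm hne.symm
    exact O.not_both _ _ hd hd'

lemma isStrong_of_collapse {R : ({w : V // w ≠ v} ⊕ ZMod d) → ({w : V // w ≠ v} ⊕ ZMod d) → Prop}
    {r : V → V → Prop} (hR : IsStrong R)
    (h : ∀ x y, R x y → collapse v x ≠ collapse v y → r (collapse v x) (collapse v y)) :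
    IsStrong r := by
  refine IsStrong.of_map (collapse v) collapse_surjective (fun x y hxy => ?_) hR
  by_cases hne : collapse v x = collapse v y
  · rw [hne]
  · exact .single (h x y hxy hne)

lemma isStrong_contractOrient (hr : Set.range m = G.neighborSet v) (hm : Function.Injective m)
    {O : Orient (localCubicMod G v d m)} (hO : IsStrong O.dir) :
    IsStrong (contractOrient hr hm O).dir :=
  isStrong_of_collapse hO fun x y hxy hne => ⟨hne, x, y, hxy, rfl, rfl⟩

lemma edgeDeletable_contractOrient (hr : Set.range m = G.neighborSet v)
    (hm : Function.Injective m) {O : Orient (localCubicMod G v d m)}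
    {x y : {w : V // w ≠ v} ⊕ ZMod d} (hxy : (localCubicMod G v d m).Adj x y)
    (h : EdgeDeletable O x y) :
    EdgeDeletable (contractOrient hr hm O) (collapse v x) (collapse v y) := by
  refine isStrong_of_collapse h fun x' y' ⟨hd, hnot⟩ hne' => ⟨⟨hne', x', y', hd, rfl, rfl⟩, ?_⟩
  have hxy' := (O.dir_iff x' y').1 (.inl hd)
  rintro (⟨h₁, h₂⟩ | ⟨h₁, h₂⟩)
  · exact hnot (.inl ⟨eq_of_adj_of_collapse_eq hm hxy' hxy h₁ h₂ hne',
      eq_of_adj_of_collapse_eq hm hxy'.symm hxy.symm h₂ h₁ hne'.symm⟩)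
  · exact hnot (.inr ⟨eq_of_adj_of_collapse_eq hm hxy' hxy.symm h₁ h₂ hne',
      eq_of_adj_of_collapse_eq hm hxy'.symm hxy h₂ h₁ hne'.symm⟩)

end Contraction

section Plan

variable {κ : Type*} (P D : κ → ZMod 3 → Prop)

lemma exists_acyclic_index (hP : ∀ j, ∃ q, Splits (P j) q) (hD : ∀ i, ∃ j, D j i)
    (hDs : ∀ j i, D j i → Splits (P j) i) :
    ∃ j₀ q₀, Splits (P j₀) q₀ ∧ ∀ i, i ≠ q₀ → ∃ j, j ≠ j₀ ∧ D j i := by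
  -- If `j₀` is the only witness of two points `a, b`, a witness `j₁` of the third point serves;
  -- otherwise `j₀` itself does.
  obtain ⟨j₀, -⟩ := hD 0
  by_cases htwo : ∃ a b, a ≠ b ∧ (∀ j, D j a → j = j₀) ∧ (∀ j, D j b → j = j₀)
  · obtain ⟨a, b, hab, ha, hb⟩ := htwo
    have hDa : D j₀ a := let ⟨j, hj⟩ := hD a; ha j hj ▸ hj
    have hDb : D j₀ b := let ⟨j, hj⟩ := hD b; hb j hj ▸ hj
    obtain ⟨j₁, hc⟩ := hD (-(a + b))
    -- `j₀` cannot be the witness for all three pendant edges, as `P j₀` does not split every vertex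
    have hj₁ : j₁ ≠ j₀ := by
      rintro rfl
      obtain ⟨q, hq⟩ := exists_not_splits (P j₁)
      rcases eq_or_eq_or_eq_third hab q with rfl | rfl | rfl
      exacts [hq (hDs _ _ hDa), hq (hDs _ _ hDb), hq (hDs _ _ hc)]
    refine ⟨j₁, -(a + b), hDs _ _ hc, fun i hi => ⟨j₀, hj₁.symm, ?_⟩⟩
    rcases eq_or_eq_or_eq_third hab i with rfl | rfl | rfl
    exacts [hDa, hDb, absurd rfl hi]
  push Not at htwo
  by_cases hone : ∃ a, ∀ j, D j a → j = j₀
  · obtain ⟨a, ha⟩ := hone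
    obtain ⟨j, hj⟩ := hD a
    refine ⟨j₀, a, ha j hj ▸ hDs _ _ hj, fun i hi => ?_⟩
    obtain ⟨j', hj', hne⟩ := htwo a i hi.symm ha
    exact ⟨j', hne, hj'⟩
  · push Not at hone
    obtain ⟨q, hq⟩ := hP j₀
    exact ⟨j₀, q, hq, fun i _ => let ⟨j, hj, hne⟩ := hone i; ⟨j, hne, hj⟩⟩

/-- Read `P j i` as "the pendant edge at `i` enters `v` in the `j`-th orientation" and `D j i` as
"it is deletable there": `q j` is the midpoint of the `j`-th lifted triangle, and `j₀` is the only
index receiving a transitive triangle. -/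
lemma exists_plan (hP : ∀ j, ∃ q, Splits (P j) q) (hD : ∀ i, ∃ j, D j i)
    (hDs : ∀ j i, D j i → Splits (P j) i) :
    ∃ (q : κ → ZMod 3) (j₀ : κ), (∀ j, Splits (P j) (q j)) ∧
      (∀ i, ∃ j, D j i ∧ (j ≠ j₀ ∨ i = q j)) ∧
      (∀ x, ∃ j, x = q j ∨ (j = j₀ ∧ ¬Splits (P j) x)) := by
  classical
  obtain ⟨j₀, q₀, hq₀, hcov⟩ := exists_acyclic_index P D hP hD hDs
  obtain ⟨c, hc⟩ := exists_not_splits (P j₀)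
  have hcq : c ≠ q₀ := fun h => hc (h ▸ hq₀)
  obtain ⟨j₁, hj₁, hD₁⟩ := hcov (-(c + q₀)) (third_ne_right hcq)
  choose q hq using hP
  refine ⟨Function.update (Function.update q j₁ (-(c + q₀))) j₀ q₀, j₀, fun j => ?_,
    fun i => ?_, fun x => ?_⟩
  · simp only [Function.update_apply]
    split_ifs with h₀ h₁
    exacts [h₀ ▸ hq₀, h₁ ▸ hDs _ _ hD₁, hq j]
  · by_cases hi : i = q₀
    · obtain ⟨j, hj⟩ := hD i
      by_cases hj₀ : j = j₀
      · exact ⟨j, hj, .inr (by simp [hj₀, hi])⟩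
      · exact ⟨j, hj, .inl hj₀⟩
    · obtain ⟨j, hne, hj⟩ := hcov i hi
      exact ⟨j, hj, .inl hne⟩
  · rcases eq_or_eq_or_eq_third hcq x with rfl | rfl | rfl
    · exact ⟨j₀, .inr ⟨rfl, hc⟩⟩
    · exact ⟨j₀, .inl (by simp)⟩
    · exact ⟨j₁, .inl (by simp [hj₁])⟩

end Plan

def IsFrankFamily {κ : Type*} {G : SimpleGraph V} (Os : κ → Orient G) : Prop :=
  (∀ i, IsStrong (Os i).dir) ∧ ∀ u w, G.Adj u w → ∃ i, EdgeDeletable (Os i) u w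

section Families

variable {G : SimpleGraph V} {v : V} {κ : Type*}

lemma exists_splits_of_isStrong {m : ZMod 3 → V} (hr : Set.range m = G.neighborSet v)
    {O : Orient G} (hO : IsStrong O.dir) : ∃ q, Splits (fun i => O.dir (m i) v) q := by
  obtain ⟨a, ha⟩ := hO.exists_to (ne_of_range_eq hr 0)
  obtain ⟨s, rfl⟩ := exists_eq_of_dir_to hr O ha
  obtain ⟨b, hb⟩ := hO.exists_from (ne_of_range_eq hr 0).symm
  obtain ⟨t, rfl⟩ := exists_eq_of_dir_from hr O hb
  exact ⟨_, s, t, ha, O.not_both _ _ hb, rfl⟩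

lemma splits_of_edgeDeletable {m : ZMod 3 → V} (hr : Set.range m = G.neighborSet v)
    {O : Orient G} {i : ZMod 3} (h : EdgeDeletable O (m i) v) :
    Splits (fun i => O.dir (m i) v) i := by
  obtain ⟨s, hs, hsi⟩ := exists_dir_to_ne_of_edgeDeletable hr h
  obtain ⟨t, ht, hti⟩ := exists_dir_from_ne_of_edgeDeletable hr h
  have hst : s ≠ t := fun e => O.not_both _ _ hs (e ▸ ht)
  exact ⟨s, t, hs, O.not_both _ _ ht, (eq_third_of_ne hst hsi.symm hti.symm).symm⟩

lemma exists_isFrankFamily_localCubicMod {m : ZMod 3 → V} (hm : Function.Injective m)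
    (hr : Set.range m = G.neighborSet v) {Os : κ → Orient G} (h : IsFrankFamily Os) :
    ∃ Os' : κ → Orient (localCubicMod G v 3 m), IsFrankFamily Os' := by
  obtain ⟨hstrong, hcover⟩ := h
  obtain ⟨q, j₀, hq, hpend, htri⟩ := exists_plan (fun j i => (Os j).dir (m i) v)
    (fun j i => EdgeDeletable (Os j) (m i) v) (fun j => exists_splits_of_isStrong hr (hstrong j))
    (fun i => hcover _ _ (adj_of_range_eq hr i).symm) (fun _ _ => splits_of_edgeDeletable hr)
  choose s t hs ht' hst using hq
  have ht : ∀ j, (Os j).dir v (m (t j)) := fun j => dir_from_of_not_dir_to hr _ (ht' j)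
  have hne : ∀ j, s j ≠ t j := fun j e => ht' j (e ▸ hs j)
  refine ⟨fun j => liftOrient hr (Os j) (triOrient (s j) (t j) (hne j) (j ≠ j₀)),
    fun j => isStrong_liftOrient hr (hstrong j) (routes_triOrient _ (hs j) (ht j) _), ?_⟩
  rintro (⟨a, ha⟩ | i) (⟨b, hb⟩ | k) hadj
  · obtain ⟨j, hj⟩ := hcover _ _ (localCubicMod_adj_inl_inl.1 hadj)
    exact ⟨j, edgeDeletable_liftOrient_inl hr hj (routes_triOrient _ (hs j) (ht j) _)⟩
  · obtain rfl : a = m k := localCubicMod_adj_inl_inr.1 hadj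
    obtain ⟨j, hj, hc⟩ := hpend k
    exact ⟨j, edgeDeletable_liftTri_pendant hm hr (hne j) (hs j) (ht j) hj
      (hc.imp_right (·.trans (hst j).symm))⟩
  · obtain rfl : b = m i := localCubicMod_adj_inr_inl.1 hadj
    obtain ⟨j, hj, hc⟩ := hpend i
    exact ⟨j, (edgeDeletable_liftTri_pendant hm hr (hne j) (hs j) (ht j) hj
      (hc.imp_right (·.trans (hst j).symm))).symm⟩
  · have hik := localCubicMod_three_adj_inr_inr.1 hadj
    obtain ⟨j, hj | ⟨hj₀, hj⟩⟩ := htri (-(i + k))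
    · exact ⟨j, edgeDeletable_liftTri_inr_of_third_eq hr (hne j) (hs j) (ht j) (hstrong j) hik
        (hj.trans (hst j).symm)⟩
    · exact ⟨j, edgeDeletable_liftTri_inr_of_not_splits hr (hne j) (hs j) (ht j) (hstrong j)
        (fun h => h hj₀) hik hj⟩

lemma exists_isFrankFamily_of_localCubicMod {d : ℕ} {m : ZMod d → V}
    (hr : Set.range m = G.neighborSet v) (hm : Function.Injective m)
    {Os : κ → Orient (localCubicMod G v d m)} (h : IsFrankFamily Os) :
    ∃ Os' : κ → Orient G, IsFrankFamily Os' := by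
  refine ⟨fun j => contractOrient hr hm (Os j), fun j => isStrong_contractOrient hr hm (h.1 j),
    fun a b hab => ?_⟩
  obtain ⟨x, y, hxy, rfl, rfl⟩ := exists_adj_collapse_eq hr hab
  obtain ⟨j, hj⟩ := h.2 x y hxy
  exact ⟨j, edgeDeletable_contractOrient hr hm hxy hj⟩

end Families

theorem frankNumber_localCubicMod {G : SimpleGraph V} {v : V} {m : ZMod 3 → V}
    (hm : Function.Injective m) (hr : Set.range m = G.neighborSet v) :
    frankNumber (localCubicMod G v 3 m) = frankNumber G := by
  unfold frankNumber
  congr 1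
  ext k
  exact ⟨fun ⟨_, h⟩ => exists_isFrankFamily_of_localCubicMod hr hm h,
    fun ⟨_, h⟩ => exists_isFrankFamily_localCubicMod hm hr h⟩

theorem stmt_12_general (G : SimpleGraph V) (v : V)
    (m : ZMod 3 → V) (hm : Function.Injective m)
    (hr : Set.range m = G.neighborSet v) :
    frankNumber (localCubicMod G v 3 m) ≤ frankNumber G :=
  (frankNumber_localCubicMod hm hr).le

theorem stmt_12 [Fintype V] (G : SimpleGraph V) (h3 : ThreeEdgeConn G) (v : V)
    (m : ZMod 3 → V) (hm : Function.Injective m)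
    (hr : Set.range m = G.neighborSet v)
    (h3v : ThreeEdgeConn (localCubicMod G v 3 m)) :
    frankNumber (localCubicMod G v 3 m) ≤ frankNumber G :=
  stmt_12_general G v m hm hr

end Frank
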